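/- Let n ≥ 3, T > 0, and M > 0. Let u : (0,T) × ℝ^n → ℝ be measurable with |u(τ,y)| ≤ M τ^{−1/4} |y|^{−1/2} for all τ ∈ (0,T) and y ≠ 0. Define ū(t,x) := ∫₀^t ∫_{ℝ^n} (|x − y| + (t − τ)^{1/2})^{−(n+1)} u(τ,y)² dy dτ. Then there exists a constant c > 0, depending only on n and independent of u, M and t, such that for all t ∈ (0,T) and all x ≠ 0: ū(t,x) ≤ c · M² · |x|^{−1}; consequently ‖ū(t,·)‖_{(n,∞)} ≤ c M² for all t ∈ (0,T). -/

import Mathlib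

open MeasureTheory ENNReal

/-- The weak-`L^r` (Lorentz `L(r,∞)`) quasinorm
`sup_{λ>0} λ · μ{x : |g x| > λ}^{1/r}` of a real-valued function. -/
noncomputable def weakNorm {X : Type*} [MeasurableSpace X] (μ : Measure X) (r : ℝ)
    (g : X → ℝ) : ℝ≥0∞ :=
  ⨆ (l : ℝ) (_ : 0 < l), ENNReal.ofReal l * μ {x | l < |g x|} ^ (1 / r)

/-- The nonlinear Oseen-type term
`ū(t,x) = ∫₀^t ∫ (|x-y|+(t-τ)^{1/2})^{-(n+1)} u(τ,y)² dy dτ` (in `ℝ≥0∞`). -/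
noncomputable def uBar (n : ℕ) (u : ℝ → EuclideanSpace ℝ (Fin n) → ℝ)
    (t : ℝ) (x : EuclideanSpace ℝ (Fin n)) : ℝ≥0∞ :=
  ∫⁻ τ in Set.Ioo 0 t, ∫⁻ y, ENNReal.ofReal
    ((‖x - y‖ + (t - τ) ^ ((1 : ℝ) / 2)) ^ (-((n : ℝ) + 1)) * u τ y ^ 2)

section Helpers
open Metric Set


lemma rpow_half_lintegral (a : ℝ) (ha : 0 < a) :
    ∫⁻ τ in Ioc 0 a, ENNReal.ofReal (τ ^ (-(1:ℝ)/2)) = ENNReal.ofReal (2 * a ^ ((1:ℝ)/2)) := by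
  have hint : IntegrableOn (fun τ : ℝ => τ ^ (-(1:ℝ)/2)) (Ioc 0 a) volume := by
    have := intervalIntegral.intervalIntegrable_rpow' (a := 0) (b := a)
      (r := -(1:ℝ)/2) (by norm_num)
    rwa [intervalIntegrable_iff_integrableOn_Ioc_of_le ha.le] at this
  rw [← ofReal_integral_eq_lintegral_ofReal hint ?_]
  · congr 1
    rw [← intervalIntegral.integral_of_le ha.le,
      integral_rpow (Or.inl (by norm_num))]
    rw [Real.zero_rpow (by norm_num)]
    norm_num
    rw [div_div_eq_mul_div, div_eq_iff (by norm_num)]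
    ring
  · filter_upwards [ae_restrict_mem measurableSet_Ioc] with τ hτ
    exact Real.rpow_nonneg hτ.1.le _

lemma time_lintegral (t : ℝ) (ht : 0 < t) :
    ∫⁻ τ in Ioo 0 t, ENNReal.ofReal (τ ^ (-(1:ℝ)/2)) * ENNReal.ofReal ((t - τ) ^ (-(1:ℝ)/2))
      ≤ 4 := by
  set a := t / 2 with ha_def
  have ha : 0 < a := by positivity
  have hsub : Ioo 0 t ⊆ Ioc 0 a ∪ Ioc a t := by
    intro τ hτ
    rcases le_or_gt τ a with h | h
    · exact Or.inl ⟨hτ.1, h⟩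
    · exact Or.inr ⟨h, hτ.2.le⟩
  calc ∫⁻ τ in Ioo 0 t, ENNReal.ofReal (τ ^ (-(1:ℝ)/2)) * ENNReal.ofReal ((t - τ) ^ (-(1:ℝ)/2))
      ≤ ∫⁻ τ in Ioc 0 a ∪ Ioc a t,
          ENNReal.ofReal (τ ^ (-(1:ℝ)/2)) * ENNReal.ofReal ((t - τ) ^ (-(1:ℝ)/2)) :=
        lintegral_mono_set hsub
    _ ≤ (∫⁻ τ in Ioc 0 a, ENNReal.ofReal (τ ^ (-(1:ℝ)/2)) * ENNReal.ofReal ((t - τ) ^ (-(1:ℝ)/2)))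
        + ∫⁻ τ in Ioc a t, ENNReal.ofReal (τ ^ (-(1:ℝ)/2)) * ENNReal.ofReal ((t - τ) ^ (-(1:ℝ)/2)) :=
        lintegral_union_le _ _ _
    _ ≤ 4 := by
      have h1 : (∫⁻ τ in Ioc 0 a, ENNReal.ofReal (τ ^ (-(1:ℝ)/2)) *
          ENNReal.ofReal ((t - τ) ^ (-(1:ℝ)/2))) ≤ 2 := by
        have hb : ∀ τ ∈ Ioc (0:ℝ) a, ENNReal.ofReal (τ ^ (-(1:ℝ)/2)) *
            ENNReal.ofReal ((t - τ) ^ (-(1:ℝ)/2))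
            ≤ ENNReal.ofReal (τ ^ (-(1:ℝ)/2)) * ENNReal.ofReal (a ^ (-(1:ℝ)/2)) := by
          intro τ hτ
          refine mul_le_mul_right (ENNReal.ofReal_le_ofReal ?_) _
          exact Real.rpow_le_rpow_of_nonpos ha (by simp only [ha_def]; linarith [hτ.2]) (by norm_num)
        calc (∫⁻ τ in Ioc 0 a, ENNReal.ofReal (τ ^ (-(1:ℝ)/2)) *
              ENNReal.ofReal ((t - τ) ^ (-(1:ℝ)/2)))
            ≤ ∫⁻ τ in Ioc 0 a, ENNReal.ofReal (τ ^ (-(1:ℝ)/2)) *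
                ENNReal.ofReal (a ^ (-(1:ℝ)/2)) :=
              setLIntegral_mono (by fun_prop) hb
          _ = (∫⁻ τ in Ioc 0 a, ENNReal.ofReal (τ ^ (-(1:ℝ)/2))) *
                ENNReal.ofReal (a ^ (-(1:ℝ)/2)) := lintegral_mul_const' _ _ ofReal_ne_top
          _ = ENNReal.ofReal (2 * a ^ ((1:ℝ)/2)) * ENNReal.ofReal (a ^ (-(1:ℝ)/2)) := by
              rw [rpow_half_lintegral a ha]
          _ = ENNReal.ofReal (2 * a ^ ((1:ℝ)/2) * a ^ (-(1:ℝ)/2)) := by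
              rw [← ENNReal.ofReal_mul (by positivity)]
          _ = 2 := by
              rw [mul_assoc, ← Real.rpow_add ha]
              norm_num
      have h2 : (∫⁻ τ in Ioc a t, ENNReal.ofReal (τ ^ (-(1:ℝ)/2)) *
          ENNReal.ofReal ((t - τ) ^ (-(1:ℝ)/2))) ≤ 2 := by
        have hb : ∀ τ ∈ Ioc a t, ENNReal.ofReal (τ ^ (-(1:ℝ)/2)) *
            ENNReal.ofReal ((t - τ) ^ (-(1:ℝ)/2))
            ≤ ENNReal.ofReal (a ^ (-(1:ℝ)/2)) * ENNReal.ofReal ((t - τ) ^ (-(1:ℝ)/2)) := by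
          intro τ hτ
          refine mul_le_mul_left (ENNReal.ofReal_le_ofReal ?_) _
          exact Real.rpow_le_rpow_of_nonpos ha hτ.1.le (by norm_num)
        have key : (∫⁻ τ in Ioc a t, ENNReal.ofReal ((t - τ) ^ (-(1:ℝ)/2)))
            = ENNReal.ofReal (2 * a ^ ((1:ℝ)/2)) := by
          have hint : IntegrableOn (fun τ : ℝ => (t - τ) ^ (-(1:ℝ)/2)) (Ioc a t) volume := by
            have h0 := intervalIntegral.intervalIntegrable_rpow' (a := 0) (b := t - a)
              (r := -(1:ℝ)/2) (by norm_num)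
            have := (h0.comp_sub_left t).symm
            simp only [sub_zero, _root_.sub_sub_cancel] at this
            rwa [intervalIntegrable_iff_integrableOn_Ioc_of_le (by linarith)] at this
          rw [← ofReal_integral_eq_lintegral_ofReal hint ?_]
          · congr 1
            rw [← intervalIntegral.integral_of_le (by linarith : a ≤ t),
              intervalIntegral.integral_comp_sub_left (fun x => x ^ (-(1:ℝ)/2)) t]
            simp only [sub_self, _root_.sub_sub_cancel]
            rw [integral_rpow (Or.inl (by norm_num))]
            rw [Real.zero_rpow (by norm_num)]
            have : t - a = a := by rw [ha_def]; ring
            rw [this]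
            norm_num
            rw [div_div_eq_mul_div, div_eq_iff (by norm_num)]
            ring
          · filter_upwards [ae_restrict_mem measurableSet_Ioc] with τ hτ
            exact Real.rpow_nonneg (by linarith [hτ.2]) _
        calc (∫⁻ τ in Ioc a t, ENNReal.ofReal (τ ^ (-(1:ℝ)/2)) *
              ENNReal.ofReal ((t - τ) ^ (-(1:ℝ)/2)))
            ≤ ∫⁻ τ in Ioc a t, ENNReal.ofReal (a ^ (-(1:ℝ)/2)) *
                ENNReal.ofReal ((t - τ) ^ (-(1:ℝ)/2)) :=
              setLIntegral_mono (by fun_prop) hb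
          _ = ENNReal.ofReal (a ^ (-(1:ℝ)/2)) *
                ∫⁻ τ in Ioc a t, ENNReal.ofReal ((t - τ) ^ (-(1:ℝ)/2)) :=
              lintegral_const_mul' _ _ ofReal_ne_top
          _ = ENNReal.ofReal (a ^ (-(1:ℝ)/2)) * ENNReal.ofReal (2 * a ^ ((1:ℝ)/2)) := by rw [key]
          _ = ENNReal.ofReal (a ^ (-(1:ℝ)/2) * (2 * a ^ ((1:ℝ)/2))) := by
              rw [← ENNReal.ofReal_mul (by positivity)]
          _ = 2 := by
              rw [show a ^ (-(1:ℝ)/2) * (2 * a ^ ((1:ℝ)/2)) = 2 * (a ^ (-(1:ℝ)/2) * a ^ ((1:ℝ)/2)) by ring,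
                ← Real.rpow_add ha]
              norm_num
      calc _ ≤ (2:ℝ≥0∞) + 2 := add_le_add h1 h2
        _ = 4 := by norm_num


lemma kernel_lintegral (n : ℕ) (hn : 1 ≤ n) : ∃ C : ℝ≥0∞, C ≠ ⊤ ∧ ∀ s : ℝ, 0 < s →
    ∫⁻ z : EuclideanSpace ℝ (Fin n), ENNReal.ofReal ((‖z‖ + s) ^ (-((n:ℝ)+1)))
      ≤ C * ENNReal.ofReal s⁻¹ := by
  haveI : Nonempty (Fin n) := ⟨⟨0, by omega⟩⟩
  set E := EuclideanSpace ℝ (Fin n)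
  set ω := volume (ball (0 : E) 1) with hω
  have hωfin : ω ≠ ⊤ := measure_ball_lt_top.ne
  refine ⟨(1 + 2^(n+1)) * ω, ?_, ?_⟩
  · exact ENNReal.mul_ne_top (by simp [ENNReal.add_ne_top, ENNReal.pow_ne_top]) hωfin
  intro s hs
  set f : E → ℝ≥0∞ := fun z => ENNReal.ofReal ((‖z‖ + s) ^ (-((n:ℝ)+1))) with hf
  set A : ℕ → Set E := fun k => ball 0 (2^(k+1)*s) \ ball 0 (2^k*s) with hA
  have hballmeas : ∀ r : ℝ, 0 ≤ r → volume (ball (0:E) r) = ENNReal.ofReal (r ^ n) * ω := by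
    intro r hr
    rw [Measure.addHaar_ball _ _ hr, finrank_euclideanSpace_fin]
  -- covering
  have hcover : (univ : Set E) ⊆ ball 0 s ∪ ⋃ k, A k := by
    intro z _
    by_cases h : ‖z‖ < s
    · exact Or.inl (by simpa [mem_ball, dist_zero_right] using h)
    · push_neg at h
      have hex : ∃ m : ℕ, ‖z‖ < 2^m * s := by
        obtain ⟨m, hm⟩ := pow_unbounded_of_one_lt (‖z‖/s) (by norm_num : (1:ℝ) < 2)
        exact ⟨m, by rwa [div_lt_iff₀ hs] at hm⟩
      right
      have hm := Nat.find_spec hex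
      set m := Nat.find hex with hmdef
      have hm0 : m ≠ 0 := by
        intro h0
        rw [h0] at hm
        simp at hm
        linarith
      refine mem_iUnion.2 ⟨m - 1, ?_, ?_⟩
      · have : m - 1 + 1 = m := Nat.succ_pred_eq_of_pos (Nat.pos_of_ne_zero hm0)
        rw [mem_ball, dist_zero_right, this]
        exact hm
      · rw [mem_ball, dist_zero_right]
        push_neg
        have := Nat.find_min hex (m := m - 1) (by omega)
        push_neg at this
        exact this
  -- ball piece
  have hball : ∫⁻ z in ball (0:E) s, f z ≤ ENNReal.ofReal s⁻¹ * ω := by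
    have hb : ∀ z ∈ ball (0:E) s, f z ≤ ENNReal.ofReal (s ^ (-((n:ℝ)+1))) := by
      intro z _
      exact ENNReal.ofReal_le_ofReal
        (Real.rpow_le_rpow_of_nonpos hs (by linarith [norm_nonneg z]) (by push_cast; linarith))
    calc ∫⁻ z in ball (0:E) s, f z
        ≤ ∫⁻ _ in ball (0:E) s, ENNReal.ofReal (s ^ (-((n:ℝ)+1))) :=
          setLIntegral_mono measurable_const hb
      _ = ENNReal.ofReal (s ^ (-((n:ℝ)+1))) * volume (ball (0:E) s) := setLIntegral_const _ _
      _ = ENNReal.ofReal (s ^ (-((n:ℝ)+1))) * (ENNReal.ofReal (s ^ n) * ω) := by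
          rw [hballmeas s hs.le]
      _ = ENNReal.ofReal (s ^ (-((n:ℝ)+1)) * s ^ n) * ω := by
          rw [← mul_assoc, ← ENNReal.ofReal_mul (by positivity)]
      _ = ENNReal.ofReal s⁻¹ * ω := by
          congr 2
          rw [Real.rpow_neg hs.le, show ((n:ℝ)+1) = ((n+1 : ℕ):ℝ) by push_cast; ring,
            Real.rpow_natCast, pow_succ]
          field_simp
  -- annuli pieces
  have hAk : ∀ k : ℕ, ∫⁻ z in A k, f z ≤ ENNReal.ofReal (2^n * s⁻¹) * ENNReal.ofReal ((1/2:ℝ)^k) * ω := by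
    intro k
    have hpos : (0:ℝ) < 2^k * s := by positivity
    have hb : ∀ z ∈ A k, f z ≤ ENNReal.ofReal ((2^k * s) ^ (-((n:ℝ)+1))) := by
      intro z hz
      refine ENNReal.ofReal_le_ofReal
        (Real.rpow_le_rpow_of_nonpos hpos ?_ (by push_cast; linarith))
      have : ¬ ‖z‖ < 2^k * s := by
        have := hz.2
        rwa [mem_ball, dist_zero_right] at this
      push_neg at this
      linarith
    have harith : (2^k * s) ^ (-((n:ℝ)+1)) * (2^(k+1) * s) ^ n = 2^n * s⁻¹ * (1/2:ℝ)^k := by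
      rw [Real.rpow_neg hpos.le, show ((n:ℝ)+1) = ((n+1 : ℕ):ℝ) by push_cast; ring,
        Real.rpow_natCast]
      rw [mul_pow, mul_pow, pow_succ 2 k, mul_pow]
      field_simp
      rw [one_div, inv_pow]; field_simp; ring
    calc ∫⁻ z in A k, f z
        ≤ ∫⁻ _ in A k, ENNReal.ofReal ((2^k * s) ^ (-((n:ℝ)+1))) :=
          setLIntegral_mono measurable_const hb
      _ = ENNReal.ofReal ((2^k * s) ^ (-((n:ℝ)+1))) * volume (A k) := setLIntegral_const _ _
      _ ≤ ENNReal.ofReal ((2^k * s) ^ (-((n:ℝ)+1))) * volume (ball (0:E) (2^(k+1)*s)) :=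
          mul_le_mul_right (measure_mono diff_subset) _
      _ = ENNReal.ofReal ((2^k * s) ^ (-((n:ℝ)+1))) * (ENNReal.ofReal ((2^(k+1)*s) ^ n) * ω) := by
          rw [hballmeas _ (by positivity)]
      _ = ENNReal.ofReal ((2^k * s) ^ (-((n:ℝ)+1)) * (2^(k+1)*s) ^ n) * ω := by
          rw [← mul_assoc, ← ENNReal.ofReal_mul (by positivity)]
      _ = ENNReal.ofReal (2^n * s⁻¹ * (1/2:ℝ)^k) * ω := by rw [harith]
      _ = ENNReal.ofReal (2^n * s⁻¹) * ENNReal.ofReal ((1/2:ℝ)^k) * ω := by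
          rw [← ENNReal.ofReal_mul (by positivity)]
  have hgeo : ∑' k : ℕ, ENNReal.ofReal ((1/2:ℝ)^k) = 2 := by
    have h12 : ENNReal.ofReal ((1/2:ℝ)) = 2⁻¹ := by
      rw [one_div, ENNReal.ofReal_inv_of_pos (by norm_num)]
      norm_num
    have : ∀ k : ℕ, ENNReal.ofReal ((1/2:ℝ)^k) = (2⁻¹ : ℝ≥0∞)^k := by
      intro k
      rw [ENNReal.ofReal_pow (by norm_num), h12]
    simp_rw [this]
    rw [ENNReal.tsum_geometric, ENNReal.one_sub_inv_two]
    simp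
  -- assemble
  calc ∫⁻ z : E, f z = ∫⁻ z in (univ : Set E), f z := by rw [setLIntegral_univ]
    _ ≤ ∫⁻ z in ball (0:E) s ∪ ⋃ k, A k, f z := lintegral_mono_set hcover
    _ ≤ (∫⁻ z in ball (0:E) s, f z) + ∫⁻ z in ⋃ k, A k, f z := lintegral_union_le _ _ _
    _ ≤ ENNReal.ofReal s⁻¹ * ω + ∑' k, ∫⁻ z in A k, f z :=
        add_le_add hball (lintegral_iUnion_le _ _)
    _ ≤ ENNReal.ofReal s⁻¹ * ω + ∑' k, ENNReal.ofReal (2^n * s⁻¹) * ENNReal.ofReal ((1/2:ℝ)^k) * ω :=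
        add_le_add_right (ENNReal.tsum_le_tsum hAk) _
    _ = ENNReal.ofReal s⁻¹ * ω + ENNReal.ofReal (2^n * s⁻¹) * 2 * ω := by
        rw [ENNReal.tsum_mul_right, ENNReal.tsum_mul_left, hgeo]
    _ ≤ (1 + 2^(n+1)) * ω * ENNReal.ofReal s⁻¹ := by
        rw [ENNReal.ofReal_mul (by positivity), ENNReal.ofReal_pow (by norm_num)]
        rw [show ENNReal.ofReal (2:ℝ) = 2 by norm_num]
        rw [add_mul, add_mul]
        apply add_le_add
        · rw [one_mul, mul_comm]
        · rw [pow_succ]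
          ring_nf
          exact le_rfl


lemma ballinv_lintegral (n : ℕ) (hn : 3 ≤ n) : ∃ C : ℝ≥0∞, C ≠ ⊤ ∧ ∀ R : ℝ, 0 < R →
    ∫⁻ y in ball (0 : EuclideanSpace ℝ (Fin n)) R, ENNReal.ofReal ‖y‖⁻¹
      ≤ C * ENNReal.ofReal (R^n / R) := by
  haveI : Nonempty (Fin n) := ⟨⟨0, by omega⟩⟩
  set E := EuclideanSpace ℝ (Fin n)
  set ω := volume (ball (0 : E) 1) with hω
  have hωfin : ω ≠ ⊤ := measure_ball_lt_top.ne
  refine ⟨4 * ω, ENNReal.mul_ne_top (by norm_num) hωfin, ?_⟩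
  intro R hR
  set f : E → ℝ≥0∞ := fun y => ENNReal.ofReal ‖y‖⁻¹ with hf
  set B : ℕ → Set E := fun k => ball 0 (R/2^k) \ ball 0 (R/2^(k+1)) with hB
  have hballmeas : ∀ r : ℝ, 0 ≤ r → volume (ball (0:E) r) = ENNReal.ofReal (r ^ n) * ω := by
    intro r hr
    rw [Measure.addHaar_ball _ _ hr, finrank_euclideanSpace_fin]
  have hcover : ball (0:E) R \ {0} ⊆ ⋃ k, B k := by
    rintro y ⟨hyR, hy0⟩
    rw [mem_ball, dist_zero_right] at hyR
    have hy0' : (0:ℝ) < ‖y‖ := norm_pos_iff.2 (by simpa using hy0)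
    have hex : ∃ m : ℕ, R/2^m ≤ ‖y‖ := by
      obtain ⟨m, hm⟩ := pow_unbounded_of_one_lt (R/‖y‖) (by norm_num : (1:ℝ) < 2)
      refine ⟨m, ?_⟩
      rw [div_lt_iff₀ hy0'] at hm
      rw [div_le_iff₀ (by positivity)]
      nlinarith
    have hm := Nat.find_spec hex
    set m := Nat.find hex with hmdef
    have hm0 : m ≠ 0 := by
      intro h0
      rw [h0] at hm
      simp at hm
      linarith
    refine mem_iUnion.2 ⟨m - 1, ?_, ?_⟩
    · rw [mem_ball, dist_zero_right]
      have := Nat.find_min hex (m := m - 1) (by omega)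
      push_neg at this
      exact this
    · rw [mem_ball, dist_zero_right]
      push_neg
      have : m - 1 + 1 = m := Nat.succ_pred_eq_of_pos (Nat.pos_of_ne_zero hm0)
      rw [this]
      exact hm
  have hBk : ∀ k : ℕ, ∫⁻ y in B k, f y
      ≤ ENNReal.ofReal (2 * (R^n/R)) * ENNReal.ofReal ((1/2:ℝ)^k) * ω := by
    intro k
    have hrk : (0:ℝ) < R/2^(k+1) := by positivity
    have hb : ∀ y ∈ B k, f y ≤ ENNReal.ofReal ((2:ℝ)^(k+1)/R) := by
      intro y hy
      have hylb : R/2^(k+1) ≤ ‖y‖ := by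
        have := hy.2
        rw [mem_ball, dist_zero_right] at this
        push_neg at this
        exact this
      refine ENNReal.ofReal_le_ofReal ?_
      have := inv_anti₀ hrk hylb
      rwa [inv_div] at this
    have harith : (2:ℝ)^(k+1)/R * (R/2^k)^n ≤ 2 * (R^n/R) * (1/2:ℝ)^k := by
      have hb1 : (1:ℝ) ≤ 2^k := one_le_pow₀ (by norm_num)
      have h1 : (2:ℝ)^(k+1)/R * (R/2^k)^n = 2 * (R^n/R) * ((2:ℝ)^k / (2^k)^n) := by
        rw [pow_succ]
        field_simp
        rw [div_pow]; field_simp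
      have h2 : (2:ℝ)^k / (2^k)^n ≤ (1/2:ℝ)^k := by
        rw [one_div, inv_pow, div_le_iff₀ (by positivity)]
        calc (2:ℝ)^k = ((2:ℝ)^k)⁻¹ * ((2:ℝ)^k)^2 := by
              field_simp
          _ ≤ ((2:ℝ)^k)⁻¹ * ((2:ℝ)^k)^n := by
              gcongr
              · omega
      rw [h1]
      have h3 : (0:ℝ) ≤ 2 * (R^n/R) := by positivity
      exact mul_le_mul_of_nonneg_left h2 h3
    calc ∫⁻ y in B k, f y
        ≤ ∫⁻ _ in B k, ENNReal.ofReal ((2:ℝ)^(k+1)/R) := setLIntegral_mono measurable_const hb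
      _ = ENNReal.ofReal ((2:ℝ)^(k+1)/R) * volume (B k) := setLIntegral_const _ _
      _ ≤ ENNReal.ofReal ((2:ℝ)^(k+1)/R) * volume (ball (0:E) (R/2^k)) :=
          mul_le_mul_right (measure_mono diff_subset) _
      _ = ENNReal.ofReal ((2:ℝ)^(k+1)/R * (R/2^k)^n) * ω := by
          rw [hballmeas _ (by positivity), ← mul_assoc, ← ENNReal.ofReal_mul (by positivity)]
      _ ≤ ENNReal.ofReal (2 * (R^n/R) * (1/2:ℝ)^k) * ω :=
          mul_le_mul_left (ENNReal.ofReal_le_ofReal harith) _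
      _ = ENNReal.ofReal (2 * (R^n/R)) * ENNReal.ofReal ((1/2:ℝ)^k) * ω := by
          rw [← ENNReal.ofReal_mul (by positivity)]
  have hgeo : ∑' k : ℕ, ENNReal.ofReal ((1/2:ℝ)^k) = 2 := by
    have h12 : ENNReal.ofReal ((1/2:ℝ)) = 2⁻¹ := by
      rw [one_div, ENNReal.ofReal_inv_of_pos (by norm_num)]
      norm_num
    have : ∀ k : ℕ, ENNReal.ofReal ((1/2:ℝ)^k) = (2⁻¹ : ℝ≥0∞)^k := by
      intro k
      rw [ENNReal.ofReal_pow (by norm_num), h12]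
    simp_rw [this]
    rw [ENNReal.tsum_geometric, ENNReal.one_sub_inv_two]
    simp
  have hN : NullSingletonClass (volume : Measure E) := inferInstance
  calc ∫⁻ y in ball (0:E) R, f y
      ≤ ∫⁻ y in (ball (0:E) R \ {0}) ∪ {0}, f y :=
        lintegral_mono_set (by intro y hy; by_cases h : y = 0 <;> simp [h, hy])
    _ ≤ (∫⁻ y in ball (0:E) R \ {0}, f y) + ∫⁻ y in ({0} : Set E), f y := lintegral_union_le _ _ _
    _ = ∫⁻ y in ball (0:E) R \ {0}, f y := by
        rw [setLIntegral_measure_zero _ _ (measure_singleton (0:E) : volume ({0} : Set E) = 0), add_zero]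
    _ ≤ ∫⁻ y in ⋃ k, B k, f y := lintegral_mono_set hcover
    _ ≤ ∑' k, ∫⁻ y in B k, f y := lintegral_iUnion_le _ _
    _ ≤ ∑' k, ENNReal.ofReal (2 * (R^n/R)) * ENNReal.ofReal ((1/2:ℝ)^k) * ω :=
        ENNReal.tsum_le_tsum hBk
    _ = ENNReal.ofReal (2 * (R^n/R)) * 2 * ω := by
        rw [ENNReal.tsum_mul_right, ENNReal.tsum_mul_left, hgeo]
    _ ≤ 4 * ω * ENNReal.ofReal (R^n/R) := by
        rw [ENNReal.ofReal_mul (by norm_num)]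
        rw [show ENNReal.ofReal (2:ℝ) = 2 by norm_num]
        ring_nf
        exact le_rfl


lemma inner_lintegral (n : ℕ) (hn : 3 ≤ n) : ∃ C : ℝ≥0∞, C ≠ ⊤ ∧
    ∀ (s : ℝ) (x : EuclideanSpace ℝ (Fin n)), 0 < s → x ≠ 0 →
      ∫⁻ y, ENNReal.ofReal ((‖x - y‖ + s) ^ (-((n:ℝ)+1)) * ‖y‖⁻¹)
        ≤ C * ENNReal.ofReal (‖x‖⁻¹ * s⁻¹) := by
  obtain ⟨C₂, hC₂fin, hC₂⟩ := kernel_lintegral n (by omega)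
  obtain ⟨C₃, hC₃fin, hC₃⟩ := ballinv_lintegral n hn
  refine ⟨2 * C₃ + 2 * C₂, by simp [ENNReal.add_ne_top, ENNReal.mul_ne_top, hC₂fin, hC₃fin], ?_⟩
  intro s x hs hx
  set a : ℝ := ‖x‖ / 2 with ha_def
  have hxn : (0:ℝ) < ‖x‖ := norm_pos_iff.2 hx
  have ha : 0 < a := by positivity
  set f : EuclideanSpace ℝ (Fin n) → ℝ≥0∞ := fun y => ENNReal.ofReal ((‖x - y‖ + s) ^ (-((n:ℝ)+1)) * ‖y‖⁻¹) with hf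
  have hS : ∫⁻ y in ball (0:EuclideanSpace ℝ (Fin n)) a, f y ≤ 2 * C₃ * ENNReal.ofReal (‖x‖⁻¹ * s⁻¹) := by
    have hb : ∀ y ∈ ball (0:EuclideanSpace ℝ (Fin n)) a, f y
        ≤ ENNReal.ofReal ((a^n * s)⁻¹) * ENNReal.ofReal ‖y‖⁻¹ := by
      intro y hy
      rw [mem_ball, dist_zero_right] at hy
      have hxy : a ≤ ‖x - y‖ := by
        have h1 : ‖x‖ - ‖y‖ ≤ ‖x - y‖ := norm_sub_norm_le x y
        have : ‖x‖ = 2 * a := by rw [ha_def]; ring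
        linarith
      have hK : (‖x - y‖ + s) ^ (-((n:ℝ)+1)) ≤ (a^n * s)⁻¹ := by
        have h2 : (‖x - y‖ + s) ^ (-((n:ℝ)+1)) ≤ (a + s) ^ (-((n:ℝ)+1)) :=
          Real.rpow_le_rpow_of_nonpos (by positivity) (by linarith) (by push_cast; linarith)
        have h3 : (a + s) ^ (-((n:ℝ)+1)) = ((a + s) ^ (n+1))⁻¹ := by
          rw [Real.rpow_neg (by positivity), show ((n:ℝ)+1) = ((n+1 : ℕ):ℝ) by push_cast; ring,
            Real.rpow_natCast]
        have h4 : a^n * s ≤ (a + s) ^ (n+1) := by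
          rw [pow_succ]
          exact mul_le_mul (pow_le_pow_left₀ ha.le (by linarith) n) (by linarith) hs.le
            (by positivity)
        calc (‖x - y‖ + s) ^ (-((n:ℝ)+1)) ≤ (a + s) ^ (-((n:ℝ)+1)) := h2
          _ = ((a + s) ^ (n+1))⁻¹ := h3
          _ ≤ (a^n * s)⁻¹ := inv_anti₀ (by positivity) h4
      rw [hf]
      simp only
      rw [← ENNReal.ofReal_mul (by positivity)]
      refine ENNReal.ofReal_le_ofReal ?_
      exact mul_le_mul_of_nonneg_right hK (by positivity)
    have harith : (a^n * s)⁻¹ * (a^n / a) = 2 * (‖x‖⁻¹ * s⁻¹) := by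
      rw [ha_def]
      have h2 : ((‖x‖/2)^n : ℝ) ≠ 0 := by positivity
      field_simp
    calc ∫⁻ y in ball (0:EuclideanSpace ℝ (Fin n)) a, f y
        ≤ ∫⁻ y in ball (0:EuclideanSpace ℝ (Fin n)) a, ENNReal.ofReal ((a^n * s)⁻¹) * ENNReal.ofReal ‖y‖⁻¹ :=
          setLIntegral_mono (by fun_prop) hb
      _ = ENNReal.ofReal ((a^n * s)⁻¹) * ∫⁻ y in ball (0:EuclideanSpace ℝ (Fin n)) a, ENNReal.ofReal ‖y‖⁻¹ :=
          lintegral_const_mul' _ _ ofReal_ne_top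
      _ ≤ ENNReal.ofReal ((a^n * s)⁻¹) * (C₃ * ENNReal.ofReal (a^n / a)) :=
          mul_le_mul_right (hC₃ a ha) _
      _ = C₃ * (ENNReal.ofReal ((a^n * s)⁻¹) * ENNReal.ofReal (a^n / a)) := by ring
      _ = C₃ * ENNReal.ofReal (2 * (‖x‖⁻¹ * s⁻¹)) := by
          rw [← ENNReal.ofReal_mul (by positivity), harith]
      _ = 2 * C₃ * ENNReal.ofReal (‖x‖⁻¹ * s⁻¹) := by
          rw [ENNReal.ofReal_mul (by norm_num), show ENNReal.ofReal (2:ℝ) = 2 by norm_num]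
          ring
  have hSc : ∫⁻ y in (ball (0:EuclideanSpace ℝ (Fin n)) a)ᶜ, f y ≤ 2 * C₂ * ENNReal.ofReal (‖x‖⁻¹ * s⁻¹) := by
    have hb : ∀ y ∈ (ball (0:EuclideanSpace ℝ (Fin n)) a)ᶜ, f y
        ≤ ENNReal.ofReal a⁻¹ * ENNReal.ofReal ((‖x - y‖ + s) ^ (-((n:ℝ)+1))) := by
      intro y hy
      have hya : a ≤ ‖y‖ := by
        simp only [mem_compl_iff, mem_ball, dist_zero_right, not_lt] at hy
        exact hy
      have hinv : ‖y‖⁻¹ ≤ a⁻¹ := inv_anti₀ ha hya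
      rw [hf]
      simp only
      rw [← ENNReal.ofReal_mul (by positivity)]
      refine ENNReal.ofReal_le_ofReal ?_
      rw [mul_comm (a⁻¹)]
      exact mul_le_mul_of_nonneg_left hinv
        (Real.rpow_nonneg (by positivity) _)
    have htrans : ∫⁻ y, ENNReal.ofReal ((‖x - y‖ + s) ^ (-((n:ℝ)+1)))
        = ∫⁻ z : EuclideanSpace ℝ (Fin n), ENNReal.ofReal ((‖z‖ + s) ^ (-((n:ℝ)+1))) := by
      have h1 : ∀ y : EuclideanSpace ℝ (Fin n),
          ENNReal.ofReal ((‖x - y‖ + s) ^ (-((n:ℝ)+1)))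
            = (fun z : EuclideanSpace ℝ (Fin n) =>
                ENNReal.ofReal ((‖z‖ + s) ^ (-((n:ℝ)+1)))) (y - x) := by
        intro y
        simp only [norm_sub_rev x y]
      simp_rw [h1]
      exact lintegral_sub_right_eq_self
        (fun z : EuclideanSpace ℝ (Fin n) => ENNReal.ofReal ((‖z‖ + s) ^ (-((n:ℝ)+1)))) x
    calc ∫⁻ y in (ball (0:EuclideanSpace ℝ (Fin n)) a)ᶜ, f y
        ≤ ∫⁻ y in (ball (0:EuclideanSpace ℝ (Fin n)) a)ᶜ,
            ENNReal.ofReal a⁻¹ * ENNReal.ofReal ((‖x - y‖ + s) ^ (-((n:ℝ)+1))) :=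
          setLIntegral_mono (by fun_prop) hb
      _ = ENNReal.ofReal a⁻¹ * ∫⁻ y in (ball (0:EuclideanSpace ℝ (Fin n)) a)ᶜ,
            ENNReal.ofReal ((‖x - y‖ + s) ^ (-((n:ℝ)+1))) :=
          lintegral_const_mul' _ _ ofReal_ne_top
      _ ≤ ENNReal.ofReal a⁻¹ * ∫⁻ y, ENNReal.ofReal ((‖x - y‖ + s) ^ (-((n:ℝ)+1))) :=
          mul_le_mul_right (setLIntegral_le_lintegral _ _) _
      _ = ENNReal.ofReal a⁻¹ *
            ∫⁻ z : EuclideanSpace ℝ (Fin n), ENNReal.ofReal ((‖z‖ + s) ^ (-((n:ℝ)+1))) := by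
          rw [htrans]
      _ ≤ ENNReal.ofReal a⁻¹ * (C₂ * ENNReal.ofReal s⁻¹) := mul_le_mul_right (hC₂ s hs) _
      _ = C₂ * (ENNReal.ofReal a⁻¹ * ENNReal.ofReal s⁻¹) := by ring
      _ = C₂ * ENNReal.ofReal (2 * (‖x‖⁻¹ * s⁻¹)) := by
          rw [← ENNReal.ofReal_mul (by positivity)]
          congr 1
          rw [ha_def]
          field_simp
      _ = 2 * C₂ * ENNReal.ofReal (‖x‖⁻¹ * s⁻¹) := by
          rw [ENNReal.ofReal_mul (by norm_num), show ENNReal.ofReal (2:ℝ) = 2 by norm_num]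
          ring
  calc ∫⁻ y, f y = ∫⁻ y in (univ : Set (EuclideanSpace ℝ (Fin n))), f y := by rw [setLIntegral_univ]
    _ ≤ ∫⁻ y in ball (0:EuclideanSpace ℝ (Fin n)) a ∪ (ball (0:EuclideanSpace ℝ (Fin n)) a)ᶜ, f y := lintegral_mono_set (by simp)
    _ ≤ (∫⁻ y in ball (0:EuclideanSpace ℝ (Fin n)) a, f y) + ∫⁻ y in (ball (0:EuclideanSpace ℝ (Fin n)) a)ᶜ, f y := lintegral_union_le _ _ _
    _ ≤ 2 * C₃ * ENNReal.ofReal (‖x‖⁻¹ * s⁻¹) + 2 * C₂ * ENNReal.ofReal (‖x‖⁻¹ * s⁻¹) :=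
        add_le_add hS hSc
    _ = (2 * C₃ + 2 * C₂) * ENNReal.ofReal (‖x‖⁻¹ * s⁻¹) := by ring

end Helpers


/-- case `p = 2n`, `α = 1/2`: if
`|u(τ,y)| ≤ M τ^{-1/4} |y|^{-1/2}`, then `ū(t,x) ≤ c M² |x|^{-1}` pointwise,
and consequently `‖ū(t)‖_{(n,∞)} ≤ c M²` for all `t ∈ (0,T)`. -/
theorem stmt19 (n : ℕ) (hn : 3 ≤ n) (T M : ℝ) (hT : 0 < T) (hM : 0 < M)
    (u : ℝ → EuclideanSpace ℝ (Fin n) → ℝ) (hu : Measurable (Function.uncurry u))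
    (hub : ∀ τ ∈ Set.Ioo 0 T, ∀ y : EuclideanSpace ℝ (Fin n), y ≠ 0 →
      |u τ y| ≤ M * τ ^ (-(1 : ℝ) / 4) * ‖y‖ ^ (-(1 : ℝ) / 2)) :
    ∃ c > 0, ∀ t ∈ Set.Ioo 0 T,
      (∀ x : EuclideanSpace ℝ (Fin n), x ≠ 0 →
        uBar n u t x ≤ ENNReal.ofReal (c * M ^ 2 * ‖x‖⁻¹)) ∧
      weakNorm volume (n : ℝ) (fun x => (uBar n u t x).toReal) ≤
        ENNReal.ofReal (c * M ^ 2) := by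
  haveI : Nonempty (Fin n) := ⟨⟨0, by omega⟩⟩
  obtain ⟨Ci, hCifin, hCi⟩ := inner_lintegral n hn
  set D : ℝ≥0∞ := 4 * Ci with hD
  have hDfin : D ≠ ⊤ := ENNReal.mul_ne_top (by norm_num) hCifin
  -- pointwise bound with ENNReal constant D
  have hpt : ∀ t ∈ Set.Ioo 0 T, ∀ x : EuclideanSpace ℝ (Fin n), x ≠ 0 →
      uBar n u t x ≤ D * ENNReal.ofReal (M^2 * ‖x‖⁻¹) := by
    intro t ht x hx
    have hxn : (0:ℝ) < ‖x‖ := norm_pos_iff.2 hx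
    have hstep : ∀ τ ∈ Set.Ioo 0 t,
        (∫⁻ y, ENNReal.ofReal
            ((‖x - y‖ + (t - τ) ^ ((1:ℝ)/2)) ^ (-((n:ℝ)+1)) * u τ y ^ 2))
          ≤ (Ci * ENNReal.ofReal (M^2) * ENNReal.ofReal ‖x‖⁻¹) *
            (ENNReal.ofReal (τ ^ (-(1:ℝ)/2)) * ENNReal.ofReal ((t - τ) ^ (-(1:ℝ)/2))) := by
      intro τ hτ
      have hτ0 : 0 < τ := hτ.1
      have htτ : 0 < t - τ := by have := hτ.2; linarith
      set s : ℝ := (t - τ) ^ ((1:ℝ)/2) with hs_def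
      have hs : 0 < s := Real.rpow_pos_of_pos htτ _
      have hsinv : s⁻¹ = (t - τ) ^ (-(1:ℝ)/2) := by
        rw [hs_def, show (-(1:ℝ)/2) = -((1:ℝ)/2) by ring, Real.rpow_neg htτ.le]
      have h0 : ∀ᵐ (y : EuclideanSpace ℝ (Fin n)), y ≠ 0 := by
        rw [MeasureTheory.ae_iff]
        simp only [not_not]
        simpa [Set.setOf_eq_eq_singleton] using
          measure_singleton (0 : EuclideanSpace ℝ (Fin n))
      have hae : ∀ᵐ (y : EuclideanSpace ℝ (Fin n)),
          ENNReal.ofReal ((‖x - y‖ + s) ^ (-((n:ℝ)+1)) * u τ y ^ 2)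
            ≤ ENNReal.ofReal (M^2 * τ ^ (-(1:ℝ)/2)) *
              ENNReal.ofReal ((‖x - y‖ + s) ^ (-((n:ℝ)+1)) * ‖y‖⁻¹) := by
        filter_upwards [h0] with y hy
        have hyn : (0:ℝ) < ‖y‖ := norm_pos_iff.2 hy
        have hub' := hub τ ⟨hτ0, lt_trans hτ.2 ht.2⟩ y hy
        have hsq : u τ y ^ 2 ≤ M^2 * τ ^ (-(1:ℝ)/2) * ‖y‖⁻¹ := by
          have h4 : (τ ^ (-(1:ℝ)/4)) ^ (2:ℕ) = τ ^ (-(1:ℝ)/2) := by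
            rw [← Real.rpow_natCast (τ ^ (-(1:ℝ)/4)) 2, ← Real.rpow_mul hτ0.le]
            norm_num
          have h5 : (‖y‖ ^ (-(1:ℝ)/2)) ^ (2:ℕ) = ‖y‖⁻¹ := by
            rw [← Real.rpow_natCast (‖y‖ ^ (-(1:ℝ)/2)) 2, ← Real.rpow_mul hyn.le]
            norm_num
            exact Real.rpow_neg_one _
          calc u τ y ^ 2 = |u τ y| ^ 2 := (sq_abs _).symm
            _ ≤ (M * τ ^ (-(1:ℝ)/4) * ‖y‖ ^ (-(1:ℝ)/2)) ^ 2 :=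
                pow_le_pow_left₀ (abs_nonneg _) hub' 2
            _ = M^2 * (τ ^ (-(1:ℝ)/4)) ^ (2:ℕ) * (‖y‖ ^ (-(1:ℝ)/2)) ^ (2:ℕ) := by ring
            _ = M^2 * τ ^ (-(1:ℝ)/2) * ‖y‖⁻¹ := by rw [h4, h5]
        have hK : 0 ≤ (‖x - y‖ + s) ^ (-((n:ℝ)+1)) := Real.rpow_nonneg (by positivity) _
        rw [← ENNReal.ofReal_mul (by positivity)]
        refine ENNReal.ofReal_le_ofReal ?_
        calc (‖x - y‖ + s) ^ (-((n:ℝ)+1)) * u τ y ^ 2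
            ≤ (‖x - y‖ + s) ^ (-((n:ℝ)+1)) * (M^2 * τ ^ (-(1:ℝ)/2) * ‖y‖⁻¹) := by
              have hy2 : (0:ℝ) ≤ u τ y ^ 2 := sq_nonneg _
              exact mul_le_mul_of_nonneg_left hsq hK
          _ = M^2 * τ ^ (-(1:ℝ)/2) * ((‖x - y‖ + s) ^ (-((n:ℝ)+1)) * ‖y‖⁻¹) := by ring
      calc (∫⁻ y, ENNReal.ofReal
            ((‖x - y‖ + (t - τ) ^ ((1:ℝ)/2)) ^ (-((n:ℝ)+1)) * u τ y ^ 2))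
          ≤ ∫⁻ y, ENNReal.ofReal (M^2 * τ ^ (-(1:ℝ)/2)) *
              ENNReal.ofReal ((‖x - y‖ + s) ^ (-((n:ℝ)+1)) * ‖y‖⁻¹) :=
            lintegral_mono_ae hae
        _ = ENNReal.ofReal (M^2 * τ ^ (-(1:ℝ)/2)) *
              ∫⁻ y, ENNReal.ofReal ((‖x - y‖ + s) ^ (-((n:ℝ)+1)) * ‖y‖⁻¹) :=
            lintegral_const_mul' _ _ ENNReal.ofReal_ne_top
        _ ≤ ENNReal.ofReal (M^2 * τ ^ (-(1:ℝ)/2)) *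
              (Ci * ENNReal.ofReal (‖x‖⁻¹ * s⁻¹)) :=
            mul_le_mul_right (hCi s x hs hx) _
        _ = (Ci * ENNReal.ofReal (M^2) * ENNReal.ofReal ‖x‖⁻¹) *
              (ENNReal.ofReal (τ ^ (-(1:ℝ)/2)) * ENNReal.ofReal ((t - τ) ^ (-(1:ℝ)/2))) := by
            rw [ENNReal.ofReal_mul (sq_nonneg M),
              ENNReal.ofReal_mul (inv_nonneg.2 (norm_nonneg x)), hsinv]
            ring
    have hconst_fin : (Ci * ENNReal.ofReal (M^2) * ENNReal.ofReal ‖x‖⁻¹) ≠ ⊤ :=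
      ENNReal.mul_ne_top (ENNReal.mul_ne_top hCifin ENNReal.ofReal_ne_top)
        ENNReal.ofReal_ne_top
    calc uBar n u t x
        = ∫⁻ τ in Set.Ioo 0 t, ∫⁻ y, ENNReal.ofReal
            ((‖x - y‖ + (t - τ) ^ ((1:ℝ)/2)) ^ (-((n:ℝ)+1)) * u τ y ^ 2) := rfl
      _ ≤ ∫⁻ τ in Set.Ioo 0 t, (Ci * ENNReal.ofReal (M^2) * ENNReal.ofReal ‖x‖⁻¹) *
            (ENNReal.ofReal (τ ^ (-(1:ℝ)/2)) * ENNReal.ofReal ((t - τ) ^ (-(1:ℝ)/2))) :=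
          setLIntegral_mono (by fun_prop) hstep
      _ = (Ci * ENNReal.ofReal (M^2) * ENNReal.ofReal ‖x‖⁻¹) *
            ∫⁻ τ in Set.Ioo 0 t,
              ENNReal.ofReal (τ ^ (-(1:ℝ)/2)) * ENNReal.ofReal ((t - τ) ^ (-(1:ℝ)/2)) :=
          lintegral_const_mul' _ _ hconst_fin
      _ ≤ (Ci * ENNReal.ofReal (M^2) * ENNReal.ofReal ‖x‖⁻¹) * 4 :=
          mul_le_mul_right (time_lintegral t ht.1) _
      _ = D * ENNReal.ofReal (M^2 * ‖x‖⁻¹) := by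
          rw [hD, ENNReal.ofReal_mul (sq_nonneg M)]
          ring
  -- real constants
  set c₀ : ℝ := D.toReal + 1 with hc₀
  have hc₀0 : 0 < c₀ := by positivity
  have hpt₀ : ∀ t ∈ Set.Ioo 0 T, ∀ x : EuclideanSpace ℝ (Fin n), x ≠ 0 →
      uBar n u t x ≤ ENNReal.ofReal (c₀ * M^2 * ‖x‖⁻¹) := by
    intro t ht x hx
    refine (hpt t ht x hx).trans ?_
    have h1 : D * ENNReal.ofReal (M^2 * ‖x‖⁻¹)
        = ENNReal.ofReal (D.toReal * (M^2 * ‖x‖⁻¹)) := by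
      rw [ENNReal.ofReal_mul ENNReal.toReal_nonneg, ENNReal.ofReal_toReal hDfin]
    rw [h1]
    refine ENNReal.ofReal_le_ofReal ?_
    have h2 : D.toReal ≤ c₀ := by rw [hc₀]; linarith
    have h3 : (0:ℝ) ≤ M^2 * ‖x‖⁻¹ := by positivity
    calc D.toReal * (M^2 * ‖x‖⁻¹) ≤ c₀ * (M^2 * ‖x‖⁻¹) :=
          mul_le_mul_of_nonneg_right h2 h3
      _ = c₀ * M^2 * ‖x‖⁻¹ := by ring
  set ν : ℝ≥0∞ := volume (Metric.ball (0 : EuclideanSpace ℝ (Fin n)) 1) with hν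
  have hνfin : ν ≠ ⊤ := measure_ball_lt_top.ne
  have hn0 : (n:ℝ) ≠ 0 := Nat.cast_ne_zero.2 (by omega)
  have hvfin : ν ^ (1/(n:ℝ)) ≠ ⊤ :=
    ENNReal.rpow_ne_top_of_nonneg (by positivity) hνfin
  set v : ℝ := (ν ^ (1/(n:ℝ))).toReal with hv
  have hv0 : 0 ≤ v := ENNReal.toReal_nonneg
  refine ⟨c₀ * max 1 v, by positivity, ?_⟩
  intro t ht
  have hle : c₀ ≤ c₀ * max 1 v := by
    nlinarith [le_max_left (1:ℝ) v]
  constructor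
  · intro x hx
    refine (hpt₀ t ht x hx).trans (ENNReal.ofReal_le_ofReal ?_)
    have : (0:ℝ) ≤ M^2 * ‖x‖⁻¹ := by positivity
    calc c₀ * M^2 * ‖x‖⁻¹ = c₀ * (M^2 * ‖x‖⁻¹) := by ring
      _ ≤ (c₀ * max 1 v) * (M^2 * ‖x‖⁻¹) := mul_le_mul_of_nonneg_right hle this
      _ = c₀ * max 1 v * M^2 * ‖x‖⁻¹ := by ring
  · rw [weakNorm]
    refine iSup₂_le fun l hl => ?_
    set R : ℝ := c₀ * M^2 / l with hR_def
    have hR0 : 0 ≤ R := by positivity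
    have hsub : {x : EuclideanSpace ℝ (Fin n) | l < |(uBar n u t x).toReal|} ⊆
        Metric.closedBall 0 R := by
      intro x hx
      simp only [Set.mem_setOf_eq] at hx
      rw [Metric.mem_closedBall, dist_zero_right]
      by_cases hx0 : x = 0
      · simpa [hx0] using hR0
      · have hxn : (0:ℝ) < ‖x‖ := norm_pos_iff.2 hx0
        have h2 : (uBar n u t x).toReal ≤ c₀ * M^2 * ‖x‖⁻¹ :=
          ENNReal.toReal_le_of_le_ofReal (by positivity) (hpt₀ t ht x hx0)
        have h3 : l < c₀ * M^2 * ‖x‖⁻¹ :=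
          lt_of_lt_of_le (by rwa [abs_of_nonneg ENNReal.toReal_nonneg] at hx) h2
        rw [hR_def, le_div_iff₀ hl]
        have h4 := mul_lt_mul_of_pos_right h3 hxn
        rw [mul_assoc, inv_mul_cancel₀ hxn.ne', mul_one] at h4
        linarith
    calc ENNReal.ofReal l *
          volume {x : EuclideanSpace ℝ (Fin n) | l < |(uBar n u t x).toReal|} ^ (1/(n:ℝ))
        ≤ ENNReal.ofReal l *
            volume (Metric.closedBall (0 : EuclideanSpace ℝ (Fin n)) R) ^ (1/(n:ℝ)) :=
          mul_le_mul_right (ENNReal.rpow_le_rpow (measure_mono hsub) (by positivity)) _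
      _ = ENNReal.ofReal l * (ENNReal.ofReal (R^n) * ν) ^ (1/(n:ℝ)) := by
          rw [Measure.addHaar_closedBall _ _ hR0, finrank_euclideanSpace_fin, hν]
      _ = ENNReal.ofReal l * (ENNReal.ofReal R * ν ^ (1/(n:ℝ))) := by
          rw [ENNReal.mul_rpow_of_nonneg _ _ (by positivity), ENNReal.ofReal_pow hR0,
            ← ENNReal.rpow_natCast (ENNReal.ofReal R) n, ← ENNReal.rpow_mul,
            mul_one_div_cancel hn0, ENNReal.rpow_one]
      _ = ENNReal.ofReal (l * R) * ν ^ (1/(n:ℝ)) := by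
          rw [ENNReal.ofReal_mul hl.le]; ring
      _ = ENNReal.ofReal (c₀ * M^2) * ENNReal.ofReal v := by
          rw [hR_def, mul_div_cancel₀ _ (ne_of_gt hl), hv, ENNReal.ofReal_toReal hvfin]
      _ = ENNReal.ofReal (c₀ * M^2 * v) := by
          rw [← ENNReal.ofReal_mul (by positivity)]
      _ ≤ ENNReal.ofReal (c₀ * max 1 v * M ^ 2) := by
          refine ENNReal.ofReal_le_ofReal ?_
          have h5 : v ≤ max 1 v := le_max_right _ _
          have h6 : c₀ * M^2 * v ≤ c₀ * M^2 * (max 1 v) :=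
            mul_le_mul_of_nonneg_left h5 (by positivity)
          have h7 : c₀ * M^2 * (max 1 v) = c₀ * max 1 v * M^2 := by ring
          linarith
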